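/- arXiv:2102.04502 — 10 statements merged into one kernel-verified Lean document; each statement's English description precedes it below -/
import Mathlib

section
/- Let P = (H_1, …, H_k) be a profile of k hierarchies on X and let p be a real number with 1/2 < p ≤ 1. Then the majority-rule consensus MR_p(P) is itself a hierarchy on X; in particular, any two clusters each belonging to at least p·k of the hierarchies H_i are compatible with each other, so the majority-rule consensus tree exists and is unique. (Taking p = 1, the same holds for the strict consensus Γ(P).) -/
/-- Two clusters (nonempty subsets of the taxon set) are compatible if one
contains the other or they are disjoint. -/
def Compatible {X : Type*} (c₁ c₂ : Set X) : Prop :=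
  c₁ ⊆ c₂ ∨ c₂ ⊆ c₁ ∨ c₁ ∩ c₂ = ∅

/-- A hierarchy on `X`: a family of pairwise compatible nonempty clusters
containing `X` itself and all singletons (the cluster encoding of a rooted
phylogenetic `X`-tree). -/
def IsHierarchy {X : Type*} (H : Set (Set X)) : Prop :=
  (∀ c ∈ H, c.Nonempty) ∧
  (∀ c₁ ∈ H, ∀ c₂ ∈ H, Compatible c₁ c₂) ∧
  Set.univ ∈ H ∧
  ∀ x : X, {x} ∈ H

/-- The strict consensus of a profile: all clusters present in every tree. -/
def strictCons {X : Type*} {k : ℕ} (P : Fin k → Set (Set X)) : Set (Set X) :=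
  {c | ∀ i, c ∈ P i}

/-- The majority-rule consensus `MR_p`: all clusters present in at least `p·k`
of the input trees. -/
def majCons {X : Type*} (p : ℝ) {k : ℕ} (P : Fin k → Set (Set X)) : Set (Set X) :=
  {c | p * (k : ℝ) ≤ (({i : Fin k | c ∈ P i}).ncard : ℝ)}

/-- The loose consensus: all clusters present in at least one input tree and
compatible with every cluster of every input tree. -/
def looseCons {X : Type*} {k : ℕ} (P : Fin k → Set (Set X)) : Set (Set X) :=
  {c | (∃ i, c ∈ P i) ∧ ∀ j, ∀ c' ∈ P j, Compatible c c'}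

lemma inter_nonempty_of_maj {k : ℕ} (hk : 1 ≤ k) {p : ℝ} (hp : 1 / 2 < p)
    {A B : Set (Fin k)} (hA : p * (k : ℝ) ≤ (A.ncard : ℝ))
    (hB : p * (k : ℝ) ≤ (B.ncard : ℝ)) : (A ∩ B).Nonempty := by
  by_contra h
  rw [Set.not_nonempty_iff_eq_empty] at h
  have hU : (A ∪ B).ncard ≤ k := by
    have := Set.ncard_le_ncard (Set.subset_univ (A ∪ B)) Set.finite_univ
    simpa [Set.ncard_univ] using this
  have hsum : A.ncard + B.ncard = (A ∪ B).ncard := by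
    rw [Set.ncard_union_eq (Set.disjoint_iff_inter_eq_empty.2 h)
      (Set.toFinite A) (Set.toFinite B)]
  have hk' : (0:ℝ) < k := by exact_mod_cast hk
  have : (k:ℝ) < p * k + p * k := by nlinarith
  have : (k:ℝ) < (A.ncard : ℝ) + (B.ncard : ℝ) := by linarith
  have : (k:ℝ) < ((A ∪ B).ncard : ℝ) := by
    rw [← hsum]; push_cast; linarith
  have : (k:ℝ) < (k:ℝ) := lt_of_lt_of_le this (by exact_mod_cast hU)
  linarith

/-- The majority-rule consensus of a profile of hierarchies is a hierarchy;
in particular any two clusters each belonging to at least `p·k` of the input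
hierarchies are compatible, so the majority-rule consensus tree exists and is
unique.  Taking `p = 1`, the same holds for the strict consensus. -/
theorem majority_rule_consensus_is_hierarchy
    {X : Type*} [Fintype X] [Nonempty X] {k : ℕ} (hk : 1 ≤ k)
    (P : Fin k → Set (Set X)) (hP : ∀ i, IsHierarchy (P i))
    (p : ℝ) (hp : 1 / 2 < p) (hp1 : p ≤ 1) :
    IsHierarchy (majCons p P) ∧
    (∀ c₁ c₂ : Set X,
      p * (k : ℝ) ≤ (({i : Fin k | c₁ ∈ P i}).ncard : ℝ) →
      p * (k : ℝ) ≤ (({i : Fin k | c₂ ∈ P i}).ncard : ℝ) →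
      Compatible c₁ c₂) ∧
    IsHierarchy (strictCons P) := by

  have key : ∀ c₁ c₂ : Set X,
      p * (k : ℝ) ≤ (({i : Fin k | c₁ ∈ P i}).ncard : ℝ) →
      p * (k : ℝ) ≤ (({i : Fin k | c₂ ∈ P i}).ncard : ℝ) →
      Compatible c₁ c₂ := by
    intro c₁ c₂ h₁ h₂
    obtain ⟨i, hi₁, hi₂⟩ := inter_nonempty_of_maj hk hp h₁ h₂
    exact (hP i).2.1 c₁ hi₁ c₂ hi₂
  have hmem : ∀ c : Set X, c ∈ majCons p P → ∃ i, c ∈ P i := by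
    intro c hc
    have hk' : (0:ℝ) < k := by exact_mod_cast hk
    have hpos : (0:ℝ) < (({i : Fin k | c ∈ P i}).ncard : ℝ) :=
      lt_of_lt_of_le (by nlinarith) hc
    have : ({i : Fin k | c ∈ P i}).ncard ≠ 0 := by exact_mod_cast hpos.ne'
    obtain ⟨i, hi⟩ := Set.nonempty_of_ncard_ne_zero this
    exact ⟨i, hi⟩
  have hall : ∀ c : Set X, (∀ i, c ∈ P i) → c ∈ majCons p P := by
    intro c hc
    have : {i : Fin k | c ∈ P i} = Set.univ := by
      ext i; simp [hc i]
    rw [majCons, Set.mem_setOf_eq, this]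
    simp only [Set.ncard_univ, Nat.card_eq_fintype_card, Fintype.card_fin]
    have hk' : (0:ℝ) ≤ k := by positivity
    nlinarith
  refine ⟨⟨?_, ?_, ?_, ?_⟩, key, ?_, ?_, ?_, ?_⟩
  · intro c hc
    obtain ⟨i, hi⟩ := hmem c hc
    exact (hP i).1 c hi
  · intro c₁ h₁ c₂ h₂
    exact key c₁ c₂ h₁ h₂
  · exact hall _ (fun i => (hP i).2.2.1)
  · exact fun x => hall _ (fun i => (hP i).2.2.2 x)
  · intro c hc
    exact (hP ⟨0, hk⟩).1 c (hc _)
  · intro c₁ h₁ c₂ h₂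
    exact (hP ⟨0, hk⟩).2.1 c₁ (h₁ _) c₂ (h₂ _)
  · exact fun i => (hP i).2.2.1
  · exact fun x i => (hP i).2.2.2 x
end

section
/- Let P = (H_1, …, H_k) be a profile of k hierarchies on X. Then the loose consensus γ(P) is itself a hierarchy on X; in particular, any two clusters that each belong to at least one H_i and are compatible with every cluster of every H_j are compatible with each other, so the loose consensus tree exists and is unique. -/
/-- The loose consensus of a profile of hierarchies is a hierarchy; in
particular any two clusters each belonging to at least one input hierarchy and
compatible with every cluster of every input hierarchy are compatible with
each other, so the loose consensus tree exists and is unique. -/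
theorem loose_consensus_is_hierarchy
    {X : Type*} [Fintype X] [Nonempty X] {k : ℕ} (hk : 1 ≤ k)
    (P : Fin k → Set (Set X)) (hP : ∀ i, IsHierarchy (P i)) :
    IsHierarchy (looseCons P) ∧
    (∀ c₁ c₂ : Set X,
      ((∃ i, c₁ ∈ P i) ∧ ∀ j, ∀ c' ∈ P j, Compatible c₁ c') →
      ((∃ i, c₂ ∈ P i) ∧ ∀ j, ∀ c' ∈ P j, Compatible c₂ c') →
      Compatible c₁ c₂) := by
  have comp : ∀ c₁ c₂ : Set X,
      ((∃ i, c₁ ∈ P i) ∧ ∀ j, ∀ c' ∈ P j, Compatible c₁ c') →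
      ((∃ i, c₂ ∈ P i) ∧ ∀ j, ∀ c' ∈ P j, Compatible c₂ c') →
      Compatible c₁ c₂ := by
    rintro c₁ c₂ ⟨⟨i, hi⟩, -⟩ ⟨-, h₂⟩
    rcases h₂ i c₁ hi with h | h | h
    · exact Or.inr (Or.inl h)
    · exact Or.inl h
    · exact Or.inr (Or.inr (by rwa [Set.inter_comm]))
  refine ⟨⟨?_, ?_, ?_, ?_⟩, comp⟩
  · rintro c ⟨⟨i, hi⟩, -⟩
    exact (hP i).1 c hi
  · exact fun c₁ h₁ c₂ h₂ => comp c₁ c₂ h₁ h₂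
  · refine ⟨⟨⟨0, hk⟩, (hP ⟨0, hk⟩).2.2.1⟩, fun j c' hc' => Or.inr (Or.inl (Set.subset_univ c'))⟩
  · intro x
    refine ⟨⟨⟨0, hk⟩, (hP ⟨0, hk⟩).2.2.2 x⟩, fun j c' hc' => ?_⟩
    by_cases hx : x ∈ c'
    · exact Or.inl (by simpa using hx)
    · refine Or.inr (Or.inr ?_)
      ext y; simp only [Set.mem_inter_iff, Set.mem_singleton_iff, Set.mem_empty_iff_false, iff_false]
      rintro ⟨rfl, hy⟩; exact hx hy
end

section
/- Majority-rule consensus is refinement-stable: for any real p with 1/2 < p ≤ 1 and any profiles P = (H_1, …, H_k) and P' = (H_1', …, H_k') of hierarchies on X such that P' refines P (i.e. H_i ⊆ H_i' for every i), one has MR_p(P) ⊆ MR_p(P'), and both MR_p(P) and MR_p(P') are hierarchies on X. -/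
lemma maj_mem_nonempty_idx {X : Type*} {p : ℝ} {k : ℕ} (hk : 1 ≤ k) (hp : 1/2 < p)
    {P : Fin k → Set (Set X)} {c : Set X} (hc : c ∈ majCons p P) :
    {i : Fin k | c ∈ P i}.Nonempty := by
  rw [Set.nonempty_iff_ne_empty]
  intro h
  rw [majCons, Set.mem_setOf_eq, h, Set.ncard_empty] at hc
  have : (0:ℝ) < p * k := by
    apply mul_pos (by linarith) (by exact_mod_cast hk)
  simp at hc; linarith

lemma maj_inter {X : Type*} {p : ℝ} {k : ℕ} (hk : 1 ≤ k) (hp : 1/2 < p)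
    {P : Fin k → Set (Set X)} {c₁ c₂ : Set X}
    (h1 : c₁ ∈ majCons p P) (h2 : c₂ ∈ majCons p P) :
    ∃ i, c₁ ∈ P i ∧ c₂ ∈ P i := by
  by_contra h
  push_neg at h
  set A := {i : Fin k | c₁ ∈ P i}
  set B := {i : Fin k | c₂ ∈ P i}
  have hAB : Disjoint A B := by
    rw [Set.disjoint_left]; intro i hi hib; exact h i hi hib
  have hfin : (A ∪ B).ncard ≤ k := by
    have h2 := Set.ncard_le_ncard (Set.subset_univ (A ∪ B)) (Set.finite_univ)
    simpa [Set.ncard_univ] using h2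
  have hun : (A ∪ B).ncard = A.ncard + B.ncard :=
    Set.ncard_union_eq hAB (Set.toFinite A) (Set.toFinite B)
  have hA := h1; have hB := h2
  rw [majCons, Set.mem_setOf_eq] at hA hB
  have : (k:ℝ) < p * k + p * k := by
    have hk0 : (1:ℝ) ≤ (k:ℝ) := by exact_mod_cast hk
    nlinarith
  have : (k:ℝ) < (A.ncard : ℝ) + B.ncard := by linarith
  have : (k:ℝ) < ((A ∪ B).ncard : ℝ) := by rw [hun]; push_cast; linarith
  have := hfin
  exact absurd this (by exact_mod_cast not_le.mpr ‹(k:ℝ) < ((A ∪ B).ncard : ℝ)›)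

lemma maj_hierarchy {X : Type*} {p : ℝ} {k : ℕ} (hk : 1 ≤ k) (hp : 1/2 < p) (hp1 : p ≤ 1)
    {P : Fin k → Set (Set X)} (hP : ∀ i, IsHierarchy (P i)) :
    IsHierarchy (majCons p P) := by
  refine ⟨?_, ?_, ?_, ?_⟩
  · intro c hc
    obtain ⟨i, hi⟩ := maj_mem_nonempty_idx hk hp hc
    exact (hP i).1 c hi
  · intro c₁ h1 c₂ h2
    obtain ⟨i, hi1, hi2⟩ := maj_inter hk hp h1 h2
    exact (hP i).2.1 c₁ hi1 c₂ hi2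
  · rw [majCons, Set.mem_setOf_eq]
    have : {i : Fin k | Set.univ ∈ P i} = Set.univ := by
      ext i; simp [(hP i).2.2.1]
    rw [this]
    simp only [Set.ncard_univ, Nat.card_eq_fintype_card, Fintype.card_fin]
    nlinarith [Nat.cast_nonneg (α := ℝ) k]
  · intro x
    rw [majCons, Set.mem_setOf_eq]
    have : {i : Fin k | {x} ∈ P i} = Set.univ := by
      ext i; simp [(hP i).2.2.2 x]
    rw [this]
    simp only [Set.ncard_univ, Nat.card_eq_fintype_card, Fintype.card_fin]
    nlinarith [Nat.cast_nonneg (α := ℝ) k]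


/-- Majority-rule consensus is refinement-stable. -/
theorem majority_rule_refinement_stable
    {X : Type*} [Fintype X] [Nonempty X] {k : ℕ} (hk : 1 ≤ k)
    (p : ℝ) (hp : 1 / 2 < p) (hp1 : p ≤ 1)
    (P P' : Fin k → Set (Set X))
    (hP : ∀ i, IsHierarchy (P i)) (hP' : ∀ i, IsHierarchy (P' i))
    (href : ∀ i, P i ⊆ P' i) :
    majCons p P ⊆ majCons p P' ∧
    IsHierarchy (majCons p P) ∧ IsHierarchy (majCons p P') := by
  refine ⟨?_, maj_hierarchy hk hp hp1 hP, maj_hierarchy hk hp hp1 hP'⟩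
  intro c hc
  rw [majCons, Set.mem_setOf_eq] at hc ⊢
  refine hc.trans ?_
  exact_mod_cast Set.ncard_le_ncard (fun i hi => href i hi) (Set.toFinite _)
end

section
/- Loose consensus is not refinement-stable: there exist a nonempty finite set X (one may take |X| = 5), a number k (one may take k = 2), and profiles P and P' of k hierarchies on X such that P' refines P but γ(P) is not a subset of γ(P'). -/
/-- Loose consensus is not refinement-stable: there exist (on a 5-element
taxon set) a number of trees `k` and profiles `P`, `P'` of `k` hierarchies
such that `P'` refines `P` but `γ(P) ⊄ γ(P')`. -/
theorem loose_consensus_not_refinement_stable :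
    ∃ (k : ℕ), 1 ≤ k ∧
      ∃ P P' : Fin k → Set (Set (Fin 5)),
        (∀ i, IsHierarchy (P i)) ∧
        (∀ i, IsHierarchy (P' i)) ∧
        (∀ i, P i ⊆ P' i) ∧
        ¬ looseCons P ⊆ looseCons P' := by
  classical
  -- base hierarchy: univ plus all singletons
  set B : Set (Set (Fin 5)) :=
    insert Set.univ (Set.range (fun x : Fin 5 => ({x} : Set (Fin 5)))) with hB
  have compat_singleton : ∀ (s : Set (Fin 5)) (x : Fin 5), Compatible s {x} := by
    intro s x
    by_cases hx : x ∈ s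
    · exact Or.inr (Or.inl (Set.singleton_subset_iff.mpr hx))
    · exact Or.inr (Or.inr (Set.inter_singleton_eq_empty.mpr hx))
  have compat_univ : ∀ s : Set (Fin 5), Compatible s Set.univ := fun s =>
    Or.inl (Set.subset_univ s)
  have compat_symm : ∀ s t : Set (Fin 5), Compatible s t → Compatible t s := by
    intro s t h
    rcases h with h | h | h
    · exact Or.inr (Or.inl h)
    · exact Or.inl h
    · exact Or.inr (Or.inr (by rw [Set.inter_comm]; exact h))
  have compat_B : ∀ s : Set (Fin 5), s.Nonempty → ∀ t ∈ B, Compatible s t := by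
    intro s hs t ht
    rcases ht with rfl | ⟨x, rfl⟩
    · exact compat_univ s
    · exact compat_singleton s x
  have hier_insert : ∀ s : Set (Fin 5), s.Nonempty → IsHierarchy (insert s B) := by
    intro s hs
    refine ⟨?_, ?_, Or.inr (Or.inl rfl), fun x => Or.inr (Or.inr ⟨x, rfl⟩)⟩
    · rintro c (rfl | rfl | ⟨x, rfl⟩)
      · exact hs
      · exact Set.univ_nonempty
      · exact Set.singleton_nonempty x
    · rintro c₁ h₁ c₂ h₂
      rcases h₁ with rfl | h₁
      · rcases h₂ with rfl | h₂
        · exact Or.inl subset_rfl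
        · exact compat_B c₁ hs c₂ h₂
      · rcases h₂ with rfl | h₂
        · exact compat_symm _ _ (compat_B c₂ hs c₁ h₁)
        · have hne : c₁.Nonempty := by
            rcases h₁ with rfl | ⟨x, rfl⟩
            · exact Set.univ_nonempty
            · exact Set.singleton_nonempty x
          exact compat_B c₁ hne c₂ h₂
  have hier_B : IsHierarchy B := by
    have := hier_insert Set.univ Set.univ_nonempty
    rwa [Set.insert_eq_self.mpr (Set.mem_insert _ _)] at this
  set c : Set (Fin 5) := {0, 1} with hc
  set d : Set (Fin 5) := {1, 2} with hd
  have hcne : c.Nonempty := ⟨0, Or.inl rfl⟩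
  have hdne : d.Nonempty := ⟨1, Or.inl rfl⟩
  refine ⟨2, by norm_num,
    (fun i => if i = 0 then insert c B else B),
    (fun i => if i = 0 then insert c B else insert d B), ?_, ?_, ?_, ?_⟩
  · intro i
    by_cases hi : i = 0 <;> simp [hi, hier_insert c hcne, hier_B]
  · intro i
    by_cases hi : i = 0 <;> simp [hi, hier_insert c hcne, hier_insert d hdne]
  · intro i
    by_cases hi : i = 0 <;> simp [hi, Set.subset_insert]
  · intro hsub
    have hcP : c ∈ looseCons (fun i : Fin 2 => if i = 0 then insert c B else B) := by
      refine ⟨⟨0, by simp⟩, ?_⟩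
      intro j c' hc'
      by_cases hj : j = 0
      · simp only [hj, if_pos rfl] at hc'
        rcases hc' with rfl | hc'
        · exact Or.inl subset_rfl
        · exact compat_B c hcne c' hc'
      · simp only [if_neg hj] at hc'
        exact compat_B c hcne c' hc'
    have hcP' := hsub hcP
    have hdmem : d ∈ (if (1 : Fin 2) = 0 then insert c B else insert d B) := by
      norm_num
    have hcd := hcP'.2 1 d hdmem
    have h0c : (0 : Fin 5) ∈ c := Or.inl rfl
    have h0d : (0 : Fin 5) ∉ d := by
      intro h; rcases h with h | h <;> simp_all
    have h2d : (2 : Fin 5) ∈ d := Or.inr rfl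
    have h2c : (2 : Fin 5) ∉ c := by
      intro h; rcases h with h | h <;> simp_all
    rcases hcd with h | h | h
    · exact h0d (h h0c)
    · exact h2c (h h2d)
    · have h1 : (1 : Fin 5) ∈ c ∩ d := ⟨Or.inr rfl, Or.inl rfl⟩
      rw [h] at h1
      exact h1
end

section
/- Let φ be any unanimous, refinement-stable consensus method for profiles of k hierarchies on X. Then for every profile P = (H_1, …, H_k), the strict consensus satisfies Γ(P) ⊆ φ(P); in particular, every cluster belonging to all of the hierarchies H_1, …, H_k also belongs to φ(P). -/
/-- Any unanimous, refinement-stable consensus method refines the strict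
consensus: `Γ(P) ⊆ φ(P)` for every profile `P` of `k` hierarchies; in
particular every cluster belonging to all input hierarchies belongs to
`φ(P)`. -/
theorem strict_consensus_coarsest
    {X : Type*} [Fintype X] [Nonempty X] {k : ℕ} (hk : 1 ≤ k)
    (φ : (Fin k → Set (Set X)) → Set (Set X))
    (hmap : ∀ P : Fin k → Set (Set X),
      (∀ i, IsHierarchy (P i)) → IsHierarchy (φ P))
    (huna : ∀ H : Set (Set X), IsHierarchy H → φ (fun _ => H) = H)
    (hstab : ∀ P P' : Fin k → Set (Set X),
      (∀ i, IsHierarchy (P i)) → (∀ i, IsHierarchy (P' i)) →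
      (∀ i, P i ⊆ P' i) → φ P ⊆ φ P')
    (P : Fin k → Set (Set X)) (hP : ∀ i, IsHierarchy (P i)) :
    strictCons P ⊆ φ P := by
  set Γ := strictCons P with hΓ
  have i0 : Fin k := ⟨0, hk⟩
  have hΓh : IsHierarchy Γ := by
    obtain ⟨hne, hcomp, huniv, hsing⟩ := hP i0
    refine ⟨fun c hc => hne c (hc i0),
      fun c₁ h₁ c₂ h₂ => hcomp c₁ (h₁ i0) c₂ (h₂ i0),
      fun i => (hP i).2.2.1,
      fun x i => (hP i).2.2.2 x⟩
  have h1 : φ (fun _ => Γ) = Γ := huna Γ hΓh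
  have h2 : φ (fun _ => Γ) ⊆ φ P :=
    hstab _ _ (fun _ => hΓh) hP (fun i c hc => hc i)
  rw [h1] at h2
  exact h2
end

section
/- Let φ be any unanimous, refinement-stable consensus method for profiles of k hierarchies on X, and let P = (H_1, …, H_k) be a profile such that every cluster of every H_i is compatible with every cluster of every H_j. Then φ(P) ⊆ γ(P). -/
/-- If every cluster of every input tree is compatible with every cluster of
every input tree, then any unanimous, refinement-stable consensus method is
refined by the loose consensus: `φ(P) ⊆ γ(P)`. -/
theorem loose_consensus_finest_under_compatibility
    {X : Type*} [Fintype X] [Nonempty X] {k : ℕ} (hk : 1 ≤ k)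
    (φ : (Fin k → Set (Set X)) → Set (Set X))
    (hmap : ∀ P : Fin k → Set (Set X),
      (∀ i, IsHierarchy (P i)) → IsHierarchy (φ P))
    (huna : ∀ H : Set (Set X), IsHierarchy H → φ (fun _ => H) = H)
    (hstab : ∀ P P' : Fin k → Set (Set X),
      (∀ i, IsHierarchy (P i)) → (∀ i, IsHierarchy (P' i)) →
      (∀ i, P i ⊆ P' i) → φ P ⊆ φ P')
    (P : Fin k → Set (Set X)) (hP : ∀ i, IsHierarchy (P i))
    (hcompat : ∀ i j, ∀ c ∈ P i, ∀ c' ∈ P j, Compatible c c') :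
    φ P ⊆ looseCons P := by
  set U : Set (Set X) := ⋃ i, P i with hU
  have hUh : IsHierarchy U := by
    refine ⟨?_, ?_, ?_, ?_⟩
    · rintro c hc
      obtain ⟨i, hi⟩ := Set.mem_iUnion.mp hc
      exact (hP i).1 c hi
    · rintro c₁ h₁ c₂ h₂
      obtain ⟨i, hi⟩ := Set.mem_iUnion.mp h₁
      obtain ⟨j, hj⟩ := Set.mem_iUnion.mp h₂
      exact hcompat i j c₁ hi c₂ hj
    · exact Set.mem_iUnion.mpr ⟨⟨0, hk⟩, (hP ⟨0, hk⟩).2.2.1⟩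
    · intro x
      exact Set.mem_iUnion.mpr ⟨⟨0, hk⟩, (hP ⟨0, hk⟩).2.2.2 x⟩
  have hsub : φ P ⊆ U := by
    have := hstab P (fun _ => U) hP (fun _ => hUh)
      (fun i => Set.subset_iUnion P i)
    rwa [huna U hUh] at this
  intro c hc
  obtain ⟨i, hi⟩ := Set.mem_iUnion.mp (hsub hc)
  refine ⟨⟨i, hi⟩, fun j c' hc' => hcompat i j c hi c' hc'⟩
end

section
/- The compatibility hypothesis in the preceding theorem cannot be dropped: there exists a profile P of 3 hierarchies on a 4-element set X such that MR_{2/3}(P) is not a subset of γ(P), even though MR_{2/3} is a unanimous, refinement-stable consensus method. (One may take P = (H, H, H') where H consists of the trivial clusters together with {1,2} and {3,4}, and H' consists of the trivial clusters together with {1,3} and {2,4}.) -/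
lemma Compatible.symm' {X : Type*} {c₁ c₂ : Set X} (h : Compatible c₁ c₂) : Compatible c₂ c₁ := by
  rcases h with h | h | h
  · exact Or.inr (Or.inl h)
  · exact Or.inl h
  · exact Or.inr (Or.inr (by rw [Set.inter_comm]; exact h))

lemma compat_univ {X : Type*} (c : Set X) : Compatible Set.univ c :=
  Or.inr (Or.inl (Set.subset_univ c))

lemma compat_singleton {X : Type*} (x : X) (c : Set X) : Compatible {x} c := by
  by_cases h : x ∈ c
  · exact Or.inl (by simpa using h)
  · refine Or.inr (Or.inr ?_)
    ext y; simp; rintro rfl; exact h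

lemma compat_refl {X : Type*} (c : Set X) : Compatible c c := Or.inl le_rfl

lemma inter3 {A B : Set (Fin 3)} (hA : 2 ≤ A.ncard) (hB : 2 ≤ B.ncard) :
    (A ∩ B).Nonempty := by
  have h := Set.ncard_inter_add_ncard_union A B (Set.toFinite A) (Set.toFinite B)
  have hu : (A ∪ B).ncard ≤ 3 := by
    have := Set.ncard_le_ncard (Set.subset_univ (A ∪ B)) (Set.toFinite _)
    simpa [Set.ncard_univ] using this
  exact Set.nonempty_of_ncard_ne_zero (by omega)

lemma mem_majCons {X : Type*} (P : Fin 3 → Set (Set X)) (c : Set X) :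
    c ∈ majCons (2 / 3) P ↔ 2 ≤ ({i : Fin 3 | c ∈ P i}).ncard := by
  simp only [majCons, Set.mem_setOf_eq]
  rw [show ((2 : ℝ) / 3) * ((3 : ℕ) : ℝ) = 2 by norm_num]
  exact_mod_cast Iff.rfl

/-- The family consisting of the trivial clusters together with `a` and `b`. -/
def trivAnd (a b : Set (Fin 4)) : Set (Set (Fin 4)) :=
  {Set.univ, a, b} ∪ Set.range (fun x => ({x} : Set (Fin 4)))

lemma hierarchy_trivAnd {a b : Set (Fin 4)} (ha : a.Nonempty) (hb : b.Nonempty)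
    (hab : Compatible a b) : IsHierarchy (trivAnd a b) := by
  refine ⟨?_, ?_, ?_, ?_⟩
  · rintro c (⟨rfl | rfl | rfl⟩ | ⟨x, rfl⟩)
    · exact Set.univ_nonempty
    · exact ha
    · exact hb
    · exact Set.singleton_nonempty x
  · rintro c₁ (⟨rfl | rfl | rfl⟩ | ⟨x, rfl⟩) c₂ (⟨rfl | rfl | rfl⟩ | ⟨y, rfl⟩)
    all_goals first
      | exact compat_univ _
      | exact (compat_univ _).symm'
      | exact compat_singleton _ _
      | exact (compat_singleton _ _).symm'
      | exact compat_refl _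
      | exact hab
      | exact hab.symm'
  · exact Or.inl (Or.inl rfl)
  · intro x; exact Or.inr ⟨x, rfl⟩

lemma mem_trivAnd_left (a b : Set (Fin 4)) : a ∈ trivAnd a b :=
  Or.inl (Or.inr (Or.inl rfl))

/-- The compatibility hypothesis cannot be dropped: there is a profile of 3
hierarchies on a 4-element taxon set such that `MR_{2/3}(P) ⊄ γ(P)`, even
though `MR_{2/3}` is a unanimous, refinement-stable consensus method. -/
theorem loose_consensus_not_finest_in_general :
    (∃ P : Fin 3 → Set (Set (Fin 4)),
      (∀ i, IsHierarchy (P i)) ∧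
      ¬ majCons (2 / 3) P ⊆ looseCons P) ∧
    (∀ P : Fin 3 → Set (Set (Fin 4)),
      (∀ i, IsHierarchy (P i)) → IsHierarchy (majCons (2 / 3) P)) ∧
    (∀ H : Set (Set (Fin 4)), IsHierarchy H →
      majCons (2 / 3) (fun _ : Fin 3 => H) = H) ∧
    (∀ P P' : Fin 3 → Set (Set (Fin 4)),
      (∀ i, IsHierarchy (P i)) → (∀ i, IsHierarchy (P' i)) →
      (∀ i, P i ⊆ P' i) → majCons (2 / 3) P ⊆ majCons (2 / 3) P') := by
  refine ⟨?_, ?_, ?_, ?_⟩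
  · -- counterexample
    set H : Set (Set (Fin 4)) := trivAnd {0, 1} {2, 3} with hH
    set H' : Set (Set (Fin 4)) := trivAnd {0, 2} {1, 3} with hH'
    refine ⟨![H, H, H'], ?_, ?_⟩
    · intro i
      fin_cases i
      · exact hierarchy_trivAnd ⟨0, by simp⟩ ⟨2, by simp⟩
          (Or.inr (Or.inr (by ext x; fin_cases x <;> simp)))
      · exact hierarchy_trivAnd ⟨0, by simp⟩ ⟨2, by simp⟩
          (Or.inr (Or.inr (by ext x; fin_cases x <;> simp)))
      · exact hierarchy_trivAnd ⟨0, by simp⟩ ⟨1, by simp⟩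
          (Or.inr (Or.inr (by ext x; fin_cases x <;> simp)))
    · intro hsub
      have hmem : ({0, 1} : Set (Fin 4)) ∈ majCons (2 / 3) ![H, H, H'] := by
        rw [mem_majCons]
        have hsub2 : ({0, 1} : Set (Fin 3)) ⊆ {i : Fin 3 | ({0, 1} : Set (Fin 4)) ∈ ![H, H, H'] i} := by
          rintro i (rfl | rfl) <;> simpa using mem_trivAnd_left _ _
        calc 2 = ({0, 1} : Set (Fin 3)).ncard := by
                  rw [Set.ncard_pair]; decide
             _ ≤ _ := Set.ncard_le_ncard hsub2 (Set.toFinite _)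
      have := hsub hmem
      obtain ⟨-, hc⟩ := this
      have h02 : ({0, 2} : Set (Fin 4)) ∈ ![H, H, H'] 2 := by
        simpa using mem_trivAnd_left ({0, 2} : Set (Fin 4)) {1, 3}
      have := hc 2 _ h02
      rcases this with h | h | h
      · have : (1 : Fin 4) ∈ ({0, 2} : Set (Fin 4)) := h (by simp)
        simp at this
      · have : (2 : Fin 4) ∈ ({0, 1} : Set (Fin 4)) := h (by simp)
        simp at this
      · have : (0 : Fin 4) ∈ ({0, 1} : Set (Fin 4)) ∩ {0, 2} := by simp
        rw [h] at this
        exact this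
  · -- majCons of hierarchies is a hierarchy
    intro P hP
    refine ⟨?_, ?_, ?_, ?_⟩
    · intro c hc
      rw [mem_majCons] at hc
      obtain ⟨i, hi⟩ := Set.nonempty_of_ncard_ne_zero (by omega :
        ({i : Fin 3 | c ∈ P i}).ncard ≠ 0)
      exact (hP i).1 c hi
    · intro c₁ h₁ c₂ h₂
      rw [mem_majCons] at h₁ h₂
      obtain ⟨i, hi₁, hi₂⟩ := inter3 h₁ h₂
      exact (hP i).2.1 c₁ hi₁ c₂ hi₂
    · rw [mem_majCons]
      have : {i : Fin 3 | Set.univ ∈ P i} = Set.univ := by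
        ext i; simpa using (hP i).2.2.1
      rw [this, Set.ncard_univ]; simp
    · intro x
      rw [mem_majCons]
      have : {i : Fin 3 | ({x} : Set (Fin 4)) ∈ P i} = Set.univ := by
        ext i; simpa using (hP i).2.2.2 x
      rw [this, Set.ncard_univ]; simp
  · -- unanimity
    intro H hH
    ext c
    rw [mem_majCons]
    constructor
    · intro h
      by_contra hc
      have : {i : Fin 3 | c ∈ H} = ∅ := by ext i; simpa using hc
      rw [this, Set.ncard_empty] at h
      omega
    · intro h
      have : {i : Fin 3 | c ∈ H} = Set.univ := by ext i; simpa using h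
      rw [this, Set.ncard_univ]; simp
  · -- monotonicity
    intro P P' _ _ hsub c hc
    rw [mem_majCons] at hc ⊢
    refine le_trans hc (Set.ncard_le_ncard ?_ (Set.toFinite _))
    intro i hi
    exact hsub i hi
end

section
/- Suppose φ is a regular, refinement-stable consensus method for profiles of k hierarchies on X. Let P = (H_1, …, H_k) be a profile, and let c1 and c2 be clusters on X such that c1 is compatible with every hierarchy H_i of P, while c2 is not compatible with c1. Then c2 ∉ φ(P). -/
/-- If `φ` is a regular, refinement-stable consensus method, `c₁` is a
cluster compatible with every input hierarchy and `c₂` is a cluster not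
compatible with `c₁`, then `c₂ ∉ φ(P)`. -/
theorem cluster_incompatible_with_compatible_cluster_excluded
    {X : Type*} [Fintype X] [Nonempty X] {k : ℕ} (hk : 1 ≤ k)
    (φ : (Fin k → Set (Set X)) → Set (Set X))
    (hmap : ∀ P : Fin k → Set (Set X),
      (∀ i, IsHierarchy (P i)) → IsHierarchy (φ P))
    (huna : ∀ H : Set (Set X), IsHierarchy H → φ (fun _ => H) = H)
    (hanon : ∀ (P : Fin k → Set (Set X)) (π : Equiv.Perm (Fin k)),
      (∀ i, IsHierarchy (P i)) → φ (fun i => P (π i)) = φ P)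
    (hneut : ∀ (P : Fin k → Set (Set X)) (σ : Equiv.Perm X),
      (∀ i, IsHierarchy (P i)) →
      φ (fun i => (Set.image σ) '' P i) = (Set.image σ) '' φ P)
    (hstab : ∀ P P' : Fin k → Set (Set X),
      (∀ i, IsHierarchy (P i)) → (∀ i, IsHierarchy (P' i)) →
      (∀ i, P i ⊆ P' i) → φ P ⊆ φ P')
    (P : Fin k → Set (Set X)) (hP : ∀ i, IsHierarchy (P i))
    (c₁ c₂ : Set X) (hc₁ : c₁.Nonempty) (hc₂ : c₂.Nonempty)
    (hc₁comp : ∀ i, ∀ c ∈ P i, Compatible c₁ c)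
    (hincomp : ¬ Compatible c₂ c₁) :
    c₂ ∉ φ P := by
  -- Symmetry of compatibility
  have hsymm : ∀ (a b : Set X), Compatible a b → Compatible b a := by
    intro a b h
    rcases h with h | h | h
    · exact Or.inr (Or.inl h)
    · exact Or.inl h
    · exact Or.inr (Or.inr (by rw [Set.inter_comm]; exact h))
  -- The minimal hierarchy containing c₁
  set H₀ : Set (Set X) := {Set.univ, c₁} ∪ {s | ∃ x : X, s = {x}} with hH₀def
  have hsing : ∀ (x : X) (s : Set X), Compatible ({x} : Set X) s := by
    intro x s
    by_cases hx : x ∈ s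
    · exact Or.inl (Set.singleton_subset_iff.mpr hx)
    · refine Or.inr (Or.inr ?_)
      ext y; simp only [Set.mem_inter_iff, Set.mem_singleton_iff, Set.mem_empty_iff_false,
        iff_false, not_and]
      rintro rfl; exact hx
  have hH₀ : IsHierarchy H₀ := by
    refine ⟨?_, ?_, ?_, ?_⟩
    · rintro c ((h | h) | ⟨x, hx⟩)
      · subst h; exact Set.univ_nonempty
      · simp only [Set.mem_singleton_iff] at h; subst h; exact hc₁
      · subst hx; exact Set.singleton_nonempty x
    · rintro a ((ha | ha) | ⟨x, hx⟩) b hb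
      · subst ha; exact Or.inr (Or.inl (Set.subset_univ _))
      · simp only [Set.mem_singleton_iff] at ha; subst ha
        rcases hb with (hb | hb) | hb
        · subst hb; exact Or.inl (Set.subset_univ _)
        · simp only [Set.mem_singleton_iff] at hb; subst hb; exact Or.inl le_rfl
        · obtain ⟨y, hy⟩ := hb; subst hy; exact hsymm _ _ (hsing y _)
      · subst hx; exact hsing x b
    · exact Or.inl (Or.inl rfl)
    · intro x; exact Or.inr ⟨x, rfl⟩
  -- The refined profile P' i = P i ∪ {c₁}
  set P' : Fin k → Set (Set X) := fun i => insert c₁ (P i) with hP'def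
  have hP' : ∀ i, IsHierarchy (P' i) := by
    intro i
    obtain ⟨hne, hcomp, huniv, hs⟩ := hP i
    refine ⟨?_, ?_, Set.mem_insert_of_mem _ huniv, fun x => Set.mem_insert_of_mem _ (hs x)⟩
    · rintro c (rfl | hc)
      · exact hc₁
      · exact hne c hc
    · rintro a (rfl | ha) b (rfl | hb)
      · exact Or.inl le_rfl
      · exact hc₁comp i b hb
      · exact hsymm _ _ (hc₁comp i a ha)
      · exact hcomp a ha b hb
  have hsub : ∀ i, P i ⊆ P' i := fun i => Set.subset_insert _ _
  have hsub0 : ∀ i : Fin k, H₀ ⊆ P' i := by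
    intro i c hc
    obtain ⟨_, _, huniv, hs⟩ := hP i
    rcases hc with (hc | hc) | ⟨x, hx⟩
    · subst hc; exact Set.mem_insert_of_mem _ huniv
    · simp only [Set.mem_singleton_iff] at hc; subst hc; exact Set.mem_insert _ _
    · subst hx; exact Set.mem_insert_of_mem _ (hs x)
  intro hc₂mem
  have hc₂' : c₂ ∈ φ P' := hstab P P' hP hP' hsub hc₂mem
  have hc₁' : c₁ ∈ φ P' := by
    have := hstab (fun _ => H₀) P' (fun _ => hH₀) hP' (fun i => hsub0 i)
    exact this (by rw [huna H₀ hH₀]; exact Or.inl (Or.inr rfl))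
  obtain ⟨_, hcomp, _, _⟩ := hmap P' hP'
  exact hincomp (hcomp c₂ hc₂' c₁ hc₁')
end

section
/- Suppose φ is a regular, refinement-stable consensus method for profiles of k hierarchies on X. Let P = (H_1, …, H_k) be a profile, and let c1 and c2 be clusters on X, each compatible with every hierarchy H_i of P, but not compatible with each other. Then φ(P) contains neither c1 nor c2. -/
lemma insert_hierarchy {X : Type*} {H : Set (Set X)} (hH : IsHierarchy H)
    {c : Set X} (hc : c.Nonempty) (hcomp : ∀ c' ∈ H, Compatible c c') :
    IsHierarchy (insert c H) := by
  obtain ⟨hne, hpc, huniv, hsing⟩ := hH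
  refine ⟨?_, ?_, Or.inr huniv, fun x => Or.inr (hsing x)⟩
  · rintro d (rfl | hd)
    · exact hc
    · exact hne d hd
  · rintro d (rfl | hd) e (rfl | he)
    · exact Or.inl subset_rfl
    · exact hcomp e he
    · exact (hcomp d hd).symm'
    · exact hpc d hd e he

lemma trivial_hierarchy (X : Type*) [Nonempty X] :
    IsHierarchy (insert Set.univ (Set.range fun x : X => ({x} : Set X))) := by
  refine ⟨?_, ?_, Or.inl rfl, fun x => Or.inr ⟨x, rfl⟩⟩
  · rintro d (rfl | ⟨x, rfl⟩)
    · exact Set.univ_nonempty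
    · exact Set.singleton_nonempty x
  · rintro d (rfl | ⟨x, rfl⟩) e (rfl | ⟨y, rfl⟩)
    · exact Or.inl subset_rfl
    · exact Or.inr (Or.inl (Set.subset_univ _))
    · exact Or.inl (Set.subset_univ _)
    · by_cases hxy : x = y
      · exact Or.inl (by rw [hxy])
      · exact Or.inr (Or.inr (by simp [Set.singleton_inter_eq_empty, hxy, Ne.symm hxy]))

lemma key_excluded
    {X : Type*} [Nonempty X] {k : ℕ}
    (φ : (Fin k → Set (Set X)) → Set (Set X))
    (hmap : ∀ P : Fin k → Set (Set X),
      (∀ i, IsHierarchy (P i)) → IsHierarchy (φ P))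
    (huna : ∀ H : Set (Set X), IsHierarchy H → φ (fun _ => H) = H)
    (hstab : ∀ P P' : Fin k → Set (Set X),
      (∀ i, IsHierarchy (P i)) → (∀ i, IsHierarchy (P' i)) →
      (∀ i, P i ⊆ P' i) → φ P ⊆ φ P')
    (P : Fin k → Set (Set X)) (hP : ∀ i, IsHierarchy (P i))
    (c₁ c₂ : Set X) (hc₂ : c₂.Nonempty)
    (hc₂comp : ∀ i, ∀ c ∈ P i, Compatible c₂ c)
    (hincomp : ¬ Compatible c₁ c₂) :
    c₁ ∉ φ P := by
  intro hmem
  set P' : Fin k → Set (Set X) := fun i => insert c₂ (P i) with hP'def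
  have hP' : ∀ i, IsHierarchy (P' i) :=
    fun i => insert_hierarchy (hP i) hc₂ (hc₂comp i)
  have h1 : c₁ ∈ φ P' :=
    hstab P P' hP hP' (fun i => Set.subset_insert _ _) hmem
  set H₀ : Set (Set X) :=
    insert c₂ (insert Set.univ (Set.range fun x : X => ({x} : Set X))) with hH₀def
  have hH₀ : IsHierarchy H₀ := by
    refine insert_hierarchy (trivial_hierarchy X) hc₂ ?_
    rintro d (rfl | ⟨x, rfl⟩)
    · exact Or.inl (Set.subset_univ _)
    · by_cases hx : x ∈ c₂
      · exact Or.inr (Or.inl (Set.singleton_subset_iff.mpr hx))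
      · exact Or.inr (Or.inr (by simp [Set.inter_singleton_eq_empty, hx]))
  have hsub : ∀ i, H₀ ⊆ P' i := by
    intro i s hs
    rcases hs with rfl | rfl | ⟨x, rfl⟩
    · exact Or.inl rfl
    · exact Or.inr (hP i).2.2.1
    · exact Or.inr ((hP i).2.2.2 x)
  have h2 : c₂ ∈ φ P' := by
    refine hstab (fun _ => H₀) P' (fun _ => hH₀) hP' (fun i => hsub i) ?_
    rw [huna H₀ hH₀]
    exact Or.inl rfl
  exact hincomp ((hmap P' hP').2.1 c₁ h1 c₂ h2)

/-- If `φ` is a regular, refinement-stable consensus method and `c₁`, `c₂`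
are clusters each compatible with every input hierarchy but not compatible
with each other, then `φ(P)` contains neither of them. -/
theorem mutually_incompatible_clusters_excluded
    {X : Type*} [Fintype X] [Nonempty X] {k : ℕ} (hk : 1 ≤ k)
    (φ : (Fin k → Set (Set X)) → Set (Set X))
    (hmap : ∀ P : Fin k → Set (Set X),
      (∀ i, IsHierarchy (P i)) → IsHierarchy (φ P))
    (huna : ∀ H : Set (Set X), IsHierarchy H → φ (fun _ => H) = H)
    (hanon : ∀ (P : Fin k → Set (Set X)) (π : Equiv.Perm (Fin k)),
      (∀ i, IsHierarchy (P i)) → φ (fun i => P (π i)) = φ P)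
    (hneut : ∀ (P : Fin k → Set (Set X)) (σ : Equiv.Perm X),
      (∀ i, IsHierarchy (P i)) →
      φ (fun i => (Set.image σ) '' P i) = (Set.image σ) '' φ P)
    (hstab : ∀ P P' : Fin k → Set (Set X),
      (∀ i, IsHierarchy (P i)) → (∀ i, IsHierarchy (P' i)) →
      (∀ i, P i ⊆ P' i) → φ P ⊆ φ P')
    (P : Fin k → Set (Set X)) (hP : ∀ i, IsHierarchy (P i))
    (c₁ c₂ : Set X) (hc₁ : c₁.Nonempty) (hc₂ : c₂.Nonempty)
    (hc₁comp : ∀ i, ∀ c ∈ P i, Compatible c₁ c)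
    (hc₂comp : ∀ i, ∀ c ∈ P i, Compatible c₂ c)
    (hincomp : ¬ Compatible c₁ c₂) :
    c₁ ∉ φ P ∧ c₂ ∉ φ P := by
  constructor
  · exact key_excluded φ hmap huna hstab P hP c₁ c₂ hc₂ hc₂comp hincomp
  · exact key_excluded φ hmap huna hstab P hP c₂ c₁ hc₁ hc₁comp
      (fun h => hincomp h.symm')
end

section
/- Suppose φ is a regular, refinement-stable consensus method for profiles of k hierarchies on X. Let P = (H_1, …, H_k) be a profile, and let T be a hierarchy on X that refines every H_i (i.e. H_i ⊆ T for all i). Then every cluster of φ(P) is compatible with every cluster of T. -/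
/-- If `φ` is a regular, refinement-stable consensus method and `T` is a
hierarchy refining every input hierarchy, then every cluster of `φ(P)` is
compatible with every cluster of `T`. -/
theorem output_compatible_with_common_refinement
    {X : Type*} [Fintype X] [Nonempty X] {k : ℕ} (hk : 1 ≤ k)
    (φ : (Fin k → Set (Set X)) → Set (Set X))
    (hmap : ∀ P : Fin k → Set (Set X),
      (∀ i, IsHierarchy (P i)) → IsHierarchy (φ P))
    (huna : ∀ H : Set (Set X), IsHierarchy H → φ (fun _ => H) = H)
    (hanon : ∀ (P : Fin k → Set (Set X)) (π : Equiv.Perm (Fin k)),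
      (∀ i, IsHierarchy (P i)) → φ (fun i => P (π i)) = φ P)
    (hneut : ∀ (P : Fin k → Set (Set X)) (σ : Equiv.Perm X),
      (∀ i, IsHierarchy (P i)) →
      φ (fun i => (Set.image σ) '' P i) = (Set.image σ) '' φ P)
    (hstab : ∀ P P' : Fin k → Set (Set X),
      (∀ i, IsHierarchy (P i)) → (∀ i, IsHierarchy (P' i)) →
      (∀ i, P i ⊆ P' i) → φ P ⊆ φ P')
    (P : Fin k → Set (Set X)) (hP : ∀ i, IsHierarchy (P i))
    (T : Set (Set X)) (hT : IsHierarchy T) (hTref : ∀ i, P i ⊆ T) :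
    ∀ c ∈ φ P, ∀ c' ∈ T, Compatible c c' := by
  have hsub : φ P ⊆ T := by
    have h := hstab P (fun _ => T) hP (fun _ => hT) hTref
    rwa [huna T hT] at h
  intro c hc c' hc'
  exact hT.2.1 c (hsub hc) c' hc'
end
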